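/- Let γ > 0 and t ∈ ℝ, and let G be a centered real Gaussian random variable with variance γ². Then E[ erf(t + G) ] = erf( t / √(1 + 2γ²) ). -/

import Mathlib

/-!
Write `s = √(1 + 2γ²)`. As functions of `t`, both sides have the same derivative: differentiating
under the integral sign, the left one has derivative `(2/√π) E[exp(-(t + G)²)]`, a Gaussian
convolution of a Gaussian, which completing the square evaluates to `(2/√π) exp(-t²/s²) / s`.
Both sides vanish at `t = 0`, the left one because `erf` is odd and `G` is symmetric.
-/

open MeasureTheory ProbabilityTheory Real

noncomputable def erf (u : ℝ) : ℝ := 2 / Real.sqrt Real.pi * ∫ r in (0:ℝ)..u, Real.exp (-r ^ 2)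

open scoped NNReal

lemma hasDerivAt_erf (u : ℝ) : HasDerivAt erf (2 / √π * exp (-u ^ 2)) u := by
  have hcont : Continuous fun r : ℝ => exp (-r ^ 2) := by fun_prop
  exact (intervalIntegral.integral_hasDerivAt_right (hcont.intervalIntegrable _ _)
    (hcont.stronglyMeasurableAtFilter _ _) hcont.continuousAt).const_mul _

lemma continuous_erf : Continuous erf :=
  continuous_iff_continuousAt.2 fun u => (hasDerivAt_erf u).continuousAt

@[simp]
lemma erf_zero : erf 0 = 0 := by simp [erf]

lemma erf_neg (u : ℝ) : erf (-u) = -erf u := by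
  have h := intervalIntegral.integral_comp_neg (a := 0) (b := u) fun r => exp (-r ^ 2)
  simp only [neg_zero, neg_sq] at h
  rw [erf, erf, h, intervalIntegral.integral_symm, mul_neg]

lemma abs_erf_le_two (u : ℝ) : |erf u| ≤ 2 := by
  have hint : |∫ r in (0:ℝ)..u, exp (-r ^ 2)| ≤ √π :=
    calc |∫ r in (0:ℝ)..u, exp (-r ^ 2)|
        = ‖∫ r in (0:ℝ)..u, exp (-r ^ 2)‖ := (norm_eq_abs _).symm
      _ ≤ ∫ r in Set.uIoc 0 u, ‖exp (-r ^ 2)‖ :=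
          intervalIntegral.norm_integral_le_integral_norm_uIoc
      _ = ∫ r in Set.uIoc 0 u, exp (-r ^ 2) := by simp only [norm_of_nonneg (exp_pos _).le]
      _ ≤ ∫ r, exp (-r ^ 2) :=
          setIntegral_le_integral (by simpa using integrable_exp_neg_mul_sq one_pos)
            (.of_forall fun r => (exp_pos _).le)
      _ = √π := by simpa using integral_gaussian 1
  have hπ : 0 < √π := sqrt_pos.2 pi_pos
  calc |erf u| = 2 / √π * |∫ r in (0:ℝ)..u, exp (-r ^ 2)| := by
        rw [erf, abs_mul, abs_of_pos (by positivity)]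
    _ ≤ 2 / √π * √π := by gcongr
    _ = 2 := div_mul_cancel₀ _ hπ.ne'

lemma hasDerivAt_integral_erf_add (μ : Measure ℝ) [IsFiniteMeasure μ] (t : ℝ) :
    HasDerivAt (fun t => ∫ x, erf (t + x) ∂μ) (2 / √π * ∫ x, exp (-(t + x) ^ 2) ∂μ) t := by
  rw [← integral_const_mul]
  have hcont : ∀ s : ℝ, Continuous fun x : ℝ => erf (s + x) := fun s =>
    continuous_erf.comp (continuous_const_add s)
  refine (hasDerivAt_integral_of_dominated_loc_of_deriv_le (F := fun s x => erf (s + x))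
    (F' := fun s x => 2 / √π * exp (-(s + x) ^ 2)) (bound := fun _ => 2 / √π)
    Filter.univ_mem (.of_forall fun s => (hcont s).aestronglyMeasurable) ?_
    (by fun_prop : Continuous fun x => 2 / √π * exp (-(t + x) ^ 2)).aestronglyMeasurable
    (.of_forall fun x s _ => ?_) (integrable_const _)
    (.of_forall fun x s _ => ?_)).2
  · exact (integrable_const (2:ℝ)).mono' (hcont t).aestronglyMeasurable
      (.of_forall fun x => abs_erf_le_two (t + x))
  · rw [norm_mul, norm_of_nonneg (by positivity), norm_of_nonneg (exp_pos _).le]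
    exact mul_le_of_le_one_right (by positivity) (exp_le_one_iff.2 (by nlinarith))
  · simpa [Function.comp_def] using (hasDerivAt_erf (s + x)).comp s ((hasDerivAt_id s).add_const x)

lemma integral_exp_neg_sq_add_gaussianReal (t : ℝ) (v : ℝ≥0) :
    ∫ x, exp (-(t + x) ^ 2) ∂gaussianReal 0 v = exp (-t ^ 2 / (1 + 2 * v)) / √(1 + 2 * v) := by
  rcases eq_or_ne v 0 with rfl | hv
  · simp [gaussianReal_zero_var]
  have hv' : (0 : ℝ) < v := by positivity
  set b : ℝ := 1 + 1 / (2 * v) with hb_def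
  have hb : 0 < b := by positivity
  -- completing the square; `b` is the coefficient of `x²` in the exponent
  have hsquare : ∀ x : ℝ, exp (-(t + x) ^ 2) * exp (-x ^ 2 / (2 * v)) =
      exp (-t ^ 2 / (1 + 2 * v)) * exp (-b * (x + t / b) ^ 2) := fun x => by
    rw [← exp_add, ← exp_add]
    congr 1
    rw [hb_def]
    field_simp
    ring
  have hsqrt : (√(2 * π * v))⁻¹ * √(π / b) = (√(1 + 2 * v))⁻¹ := by
    rw [show 2 * π * v = (1 + 2 * v) * (π / b) by rw [hb_def]; field_simp; ring,
      sqrt_mul (by positivity), mul_inv, mul_assoc, inv_mul_cancel₀ (by positivity), mul_one]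
  calc ∫ x, exp (-(t + x) ^ 2) ∂gaussianReal 0 v
      = ∫ x, (√(2 * π * v))⁻¹ * exp (-t ^ 2 / (1 + 2 * v)) * exp (-b * (x + t / b) ^ 2) := by
        rw [integral_gaussianReal_eq_integral_smul hv]
        congr 1 with x
        simp only [gaussianPDFReal_def, smul_eq_mul, sub_zero]
        linear_combination (√(2 * π * v))⁻¹ * hsquare x
    _ = (√(2 * π * v))⁻¹ * exp (-t ^ 2 / (1 + 2 * v)) * √(π / b) := by
        rw [integral_const_mul, integral_add_right_eq_self (fun x => exp (-b * x ^ 2)),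
          integral_gaussian]
    _ = exp (-t ^ 2 / (1 + 2 * v)) / √(1 + 2 * v) := by
        rw [mul_right_comm, hsqrt, inv_mul_eq_div]

lemma integral_erf_gaussianReal (v : ℝ≥0) : ∫ x, erf x ∂gaussianReal 0 v = 0 := by
  have h := integral_map (μ := gaussianReal 0 v) (φ := fun x => -x) (f := erf) (by fun_prop)
    continuous_erf.aestronglyMeasurable
  simp only [gaussianReal_map_neg, neg_zero, erf_neg, integral_neg] at h
  linarith

lemma integral_erf_add_gaussianReal (t : ℝ) (v : ℝ≥0) :
    ∫ x, erf (t + x) ∂gaussianReal 0 v = erf (t / √(1 + 2 * v)) := by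
  have hderiv : ∀ u, HasDerivAt
      (fun u => ∫ x, erf (u + x) ∂gaussianReal 0 v - erf (u / √(1 + 2 * v))) 0 u := by
    intro u
    have hleft := hasDerivAt_integral_erf_add (gaussianReal 0 v) u
    rw [integral_exp_neg_sq_add_gaussianReal] at hleft
    have hright := (hasDerivAt_erf (u / √(1 + 2 * v))).comp u
      ((hasDerivAt_id u).div_const √(1 + 2 * v))
    rw [div_pow, sq_sqrt (by positivity), ← neg_div] at hright
    exact (hleft.sub hright).congr_deriv (by ring)
  have := is_const_of_deriv_eq_zero (fun u => (hderiv u).differentiableAt)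
    (fun u => (hderiv u).deriv) t 0
  simpa [integral_erf_gaussianReal, sub_eq_zero] using this

theorem stmt16_general (γ t : ℝ)
    {Ω : Type*} [MeasurableSpace Ω] (P : Measure Ω)
    (G : Ω → ℝ) (hGmeas : Measurable G)
    (hG : Measure.map G P = gaussianReal 0 (γ ^ 2).toNNReal) :
    ∫ ω, erf (t + G ω) ∂P = erf (t / Real.sqrt (1 + 2 * γ ^ 2)) := by
  rw [← integral_map (f := fun x => erf (t + x)) hGmeas.aemeasurable
      (continuous_erf.comp (continuous_const_add t)).aestronglyMeasurable,
    hG, integral_erf_add_gaussianReal, Real.coe_toNNReal _ (sq_nonneg γ)]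

/-- For a centered Gaussian `G` with variance `γ²`,
`E[erf(t + G)] = erf(t / √(1 + 2γ²))`. -/
theorem stmt16 (γ t : ℝ) (hγ : 0 < γ)
    {Ω : Type*} [MeasurableSpace Ω] (P : Measure Ω) [IsProbabilityMeasure P]
    (G : Ω → ℝ) (hGmeas : Measurable G)
    (hG : Measure.map G P = gaussianReal 0 (γ ^ 2).toNNReal) :
    ∫ ω, erf (t + G ω) ∂P = erf (t / Real.sqrt (1 + 2 * γ ^ 2)) :=
  stmt16_general γ t P G hGmeas hG
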